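/- Let F : Y → [0, +∞) be convex and Fréchet differentiable with gradient ∇F, let J : X → ℝ ∪ {+∞} be proper and convex, and let δ ≥ 0 and u† ∈ X with F(Ku†) ≤ δ and J(u†) < ∞. Suppose for a fixed k ≥ 1 the Bregman iterates satisfy: p^{k−1} ∈ ∂J(u^{k−1}), p^k := p^{k−1} − K*∇F(Ku^k) ∈ ∂J(u^k), and the discrepancy principle is not yet satisfied, i.e., δ < F(Ku^k). Then the Bregman distances to u† are strictly Fejér monotone: D_J^{p^k}(u†, u^k) < D_J^{p^{k−1}}(u†, u^{k−1}). -/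

import Mathlib

/-!
Write `g = ∇F(Ku¹)` and `p¹ = p⁰ - K*g`. Expanding the two Bregman distances,
`D^{p¹}(u†, u¹) - D^{p⁰}(u†, u⁰) = -D^{p⁰}(u¹, u⁰) + ⟨g, Ku† - Ku¹⟩`.
The first term is `≤ 0` because `p⁰ ∈ ∂J(u⁰)`, and by the gradient inequality for the convex
`F` the second is at most `F(Ku†) - F(Ku¹) ≤ δ - F(Ku¹) < 0`. The subgradient inequalities at
`u†` show that `J(u⁰)` and `J(u¹)` are finite, so the computation can be done in `ℝ`.
-/

open scoped RealInnerProductSpace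

/-- Subgradient of an extended-real-valued convex function:
p ∈ ∂J(v) means J(w) ≥ J(v) + ⟨p, w − v⟩ for all w. -/
def ESubgradAt {X : Type*} [NormedAddCommGroup X] [InnerProductSpace ℝ X]
    (J : X → EReal) (p v : X) : Prop :=
  ∀ w, J v + (⟪p, w - v⟫ : ℝ) ≤ J w

/-- Generalized Bregman distance D_J^p(u, v) := J(u) − J(v) − ⟨p, u − v⟩. -/
noncomputable def ebreg {X : Type*} [NormedAddCommGroup X] [InnerProductSpace ℝ X]
    (J : X → EReal) (p u v : X) : EReal :=
  J u - J v - (⟪p, u - v⟫ : ℝ)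

section FirstOrderCondition

variable {E : Type*} [NormedAddCommGroup E] [NormedSpace ℝ E] {s : Set E} {f : E → ℝ}
  {f' : E →L[ℝ] ℝ} {x y : E}

theorem ConvexOn.add_apply_sub_le_of_hasFDerivAt (hf : ConvexOn ℝ s f) (hx : x ∈ s) (hy : y ∈ s)
    (hf' : HasFDerivAt f f' x) : f x + f' (y - x) ≤ f y := by
  let ℓ : ℝ →ᵃ[ℝ] E := AffineMap.lineMap x y
  have hconv : ConvexOn ℝ (ℓ ⁻¹' s) (f ∘ ℓ) := hf.comp_affineMap ℓ
  have hderiv : HasDerivAt (f ∘ ℓ) (f' (y - x)) 0 := by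
    have hf'0 : HasFDerivAt f f' (ℓ 0) := by simpa [ℓ] using hf'
    exact hf'0.comp_hasDerivAt 0 AffineMap.hasDerivAt_lineMap
  have hslope := hconv.le_slope_of_hasDerivAt (by simpa [ℓ] using hx) (by simpa [ℓ] using hy)
    zero_lt_one hderiv
  simp only [slope_def_field, Function.comp_apply, ℓ, AffineMap.lineMap_apply_zero,
    AffineMap.lineMap_apply_one, sub_zero, div_one] at hslope
  linarith

end FirstOrderCondition

theorem ConvexOn.add_inner_sub_le_of_hasGradientAt {Y : Type*} [NormedAddCommGroup Y]
    [InnerProductSpace ℝ Y] [CompleteSpace Y] {s : Set Y} {F : Y → ℝ} {g y z : Y}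
    (hF : ConvexOn ℝ s F) (hy : y ∈ s) (hz : z ∈ s) (hg : HasGradientAt F g y) :
    F y + ⟪g, z - y⟫ ≤ F z := by
  simpa using hF.add_apply_sub_le_of_hasFDerivAt hy hz (hasGradientAt_iff_hasFDerivAt.mp hg)

section Bregman

variable {X : Type*} [NormedAddCommGroup X] [InnerProductSpace ℝ X] {J : X → EReal}
  {p q p₀ u v w v₀ v₁ : X}

theorem ESubgradAt.ne_top (h : ESubgradAt J p v) (hw : J w ≠ ⊤) : J v ≠ ⊤ := by
  intro hv
  have := h w
  rw [hv, EReal.top_add_of_ne_bot (EReal.coe_ne_bot _), top_le_iff] at this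
  exact hw this

theorem ESubgradAt.toReal_add_inner_le (h : ESubgradAt J p v) (hv : J v ≠ ⊥) (hw : J w ≠ ⊤) :
    (J v).toReal + ⟪p, w - v⟫ ≤ (J w).toReal := by
  have hvfin : J v = ((J v).toReal : EReal) := (EReal.coe_toReal (h.ne_top hw) hv).symm
  have hle : (((J v).toReal + ⟪p, w - v⟫ : ℝ) : EReal) ≤ J w := by
    rw [EReal.coe_add, ← hvfin]
    exact h w
  have hwbot : J w ≠ ⊥ := ne_bot_of_le_ne_bot (EReal.coe_ne_bot _) hle
  rwa [← EReal.coe_toReal hw hwbot, EReal.coe_le_coe_iff] at hle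

theorem ebreg_eq_coe (hu : J u ≠ ⊤) (hu' : J u ≠ ⊥) (hv : J v ≠ ⊤) (hv' : J v ≠ ⊥) :
    ebreg J p u v = (((J u).toReal - (J v).toReal - ⟪p, u - v⟫ : ℝ) : EReal) := by
  rw [ebreg, ← EReal.coe_toReal hu hu', ← EReal.coe_toReal hv hv', EReal.coe_sub, EReal.coe_sub,
    EReal.toReal_coe, EReal.toReal_coe]

theorem ebreg_sub_lt_ebreg (hJ : ∀ x, J x ≠ ⊥) (hu : J u ≠ ⊤) (hp₀ : ESubgradAt J p₀ v₀)
    (hp₁ : ESubgradAt J (p₀ - q) v₁) (hq : ⟪q, u - v₁⟫ < 0) :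
    ebreg J (p₀ - q) u v₁ < ebreg J p₀ u v₀ := by
  have hv₁ : J v₁ ≠ ⊤ := hp₁.ne_top hu
  have hstep := hp₀.toReal_add_inner_le (hJ v₀) hv₁
  have hsplit : ⟪p₀, u - v₀⟫ = ⟪p₀, u - v₁⟫ + ⟪p₀, v₁ - v₀⟫ := by
    rw [← inner_add_right, sub_add_sub_cancel]
  rw [ebreg_eq_coe hu (hJ u) hv₁ (hJ v₁), ebreg_eq_coe hu (hJ u) (hp₀.ne_top hu) (hJ v₀),
    EReal.coe_lt_coe_iff, inner_sub_left, hsplit]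
  linarith

end Bregman

theorem stmt_9_general
    {X Y : Type*} [NormedAddCommGroup X] [InnerProductSpace ℝ X] [CompleteSpace X]
    [NormedAddCommGroup Y] [InnerProductSpace ℝ Y] [CompleteSpace Y]
    (K : X →L[ℝ] Y)
    (F : Y → ℝ) (gF : Y → Y)
    (hFgrad : ∀ y, HasGradientAt F (gF y) y)
    (hFconv : ConvexOn ℝ Set.univ F)
    (J : X → EReal)
    (hJbot : ∀ u, J u ≠ ⊥)
    (δ : ℝ) (udag : X)
    (hdata : F (K udag) ≤ δ) (hJudag : J udag ≠ ⊤)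
    (u₀ u₁ p₀ : X)
    (hp₀ : ESubgradAt J p₀ u₀)
    (hp₁ : ESubgradAt J (p₀ - ContinuousLinearMap.adjoint K (gF (K u₁))) u₁)
    (hdisc : δ < F (K u₁)) :
    ebreg J (p₀ - ContinuousLinearMap.adjoint K (gF (K u₁))) udag u₁
      < ebreg J p₀ udag u₀ := by
  refine ebreg_sub_lt_ebreg hJbot hJudag hp₀ hp₁ ?_
  have hgrad := hFconv.add_inner_sub_le_of_hasGradientAt (Set.mem_univ _)
    (Set.mem_univ (K udag)) (hFgrad (K u₁))
  calc ⟪ContinuousLinearMap.adjoint K (gF (K u₁)), udag - u₁⟫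
      = ⟪gF (K u₁), K udag - K u₁⟫ := by
        rw [ContinuousLinearMap.adjoint_inner_left, map_sub]
    _ ≤ F (K udag) - F (K u₁) := by linarith
    _ < 0 := by linarith

/-- **Strict Fejér monotonicity of the Bregman iteration before the discrepancy
principle is met.** F : Y → [0, ∞) convex Fréchet differentiable with gradient ∇F,
J proper convex, F(Ku†) ≤ δ, J(u†) < ∞. If p^{k−1} ∈ ∂J(u^{k−1}),
p^k := p^{k−1} − K*∇F(Ku^k) ∈ ∂J(u^k) and δ < F(Ku^k), then
D_J^{p^k}(u†, u^k) < D_J^{p^{k−1}}(u†, u^{k−1}). -/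
theorem stmt_9
    {X Y : Type*} [NormedAddCommGroup X] [InnerProductSpace ℝ X] [CompleteSpace X]
    [NormedAddCommGroup Y] [InnerProductSpace ℝ Y] [CompleteSpace Y]
    (K : X →L[ℝ] Y)
    (F : Y → ℝ) (gF : Y → Y)
    (hFgrad : ∀ y, HasGradientAt F (gF y) y)
    (hFconv : ConvexOn ℝ Set.univ F) (hFnonneg : ∀ y, 0 ≤ F y)
    (J : X → EReal)
    (hJbot : ∀ u, J u ≠ ⊥)
    (hJproper : ∃ u, J u ≠ ⊤)
    (hJconv : ∀ u v : X, ∀ t : ℝ, 0 ≤ t → t ≤ 1 →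
      J (t • u + (1 - t) • v) ≤ (t : EReal) * J u + ((1 - t : ℝ) : EReal) * J v)
    (δ : ℝ) (hδ : 0 ≤ δ) (udag : X)
    (hdata : F (K udag) ≤ δ) (hJudag : J udag ≠ ⊤)
    (u₀ u₁ p₀ : X)
    (hp₀ : ESubgradAt J p₀ u₀)
    (hp₁ : ESubgradAt J (p₀ - ContinuousLinearMap.adjoint K (gF (K u₁))) u₁)
    (hdisc : δ < F (K u₁)) :
    ebreg J (p₀ - ContinuousLinearMap.adjoint K (gF (K u₁))) udag u₁
      < ebreg J p₀ udag u₀ :=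
  stmt_9_general K F gF hFgrad hFconv J hJbot δ udag hdata hJudag u₀ u₁ p₀ hp₀ hp₁ hdisc
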